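/- arXiv:1107.5777 — 6 statements merged into one kernel-verified Lean document; each statement's English description precedes it below -/
import Mathlib

section
/- For any abelian group A and functions μ: Z₃ → Z, τ: Z₃ → A with μ(0)=2, μ(1)=μ(2)=-1, and τ(0)=0, the binary operation (x,a)*(y,b) = (2y-x, -a + μ(x-y)·b + τ(x-y)) on Z₃ × A satisfies the three quandle axioms: idempotency, right invertibility, and right self-distributivity. -/
/-- The (generalized) Galkin operation on `ZMod 3 × A` determined by functions
`μ : ZMod 3 → ℤ` and `τ : ZMod 3 → A`. -/
def genOp {A : Type*} [AddCommGroup A] (μ : ZMod 3 → ℤ) (τ : ZMod 3 → A)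
    (p q : ZMod 3 × A) : ZMod 3 × A :=
  (2 * q.1 - p.1, -p.2 + μ (p.1 - q.1) • q.2 + τ (p.1 - q.1))

theorem stmt_0 {A : Type*} [AddCommGroup A] (μ : ZMod 3 → ℤ) (τ : ZMod 3 → A)
    (hμ0 : μ 0 = 2) (hμ1 : μ 1 = -1) (hμ2 : μ 2 = -1) (hτ0 : τ 0 = 0) :
    (∀ p : ZMod 3 × A, genOp μ τ p p = p) ∧
    (∀ q r : ZMod 3 × A, ∃! p : ZMod 3 × A, genOp μ τ p q = r) ∧
    (∀ p q r : ZMod 3 × A,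
      genOp μ τ (genOp μ τ p q) r = genOp μ τ (genOp μ τ p r) (genOp μ τ q r)) := by
  refine ⟨?_, ?_, ?_⟩
  · rintro ⟨x, a⟩
    simp [genOp, hμ0, hτ0, two_smul, two_mul]
  · rintro ⟨y, b⟩ ⟨z, c⟩
    refine ⟨(2 * y - z, μ (y - z) • b + τ (y - z) - c), ?_, ?_⟩
    · simp only [genOp, Prod.mk.injEq]
      constructor
      · ring
      · have : (2 * y - z - y : ZMod 3) = y - z := by ring
        rw [this]; abel
    · rintro ⟨x, a⟩ h
      simp only [genOp, Prod.mk.injEq] at h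
      obtain ⟨h1, h2⟩ := h
      have hx : x = 2 * y - z := by rw [← h1]; ring
      subst hx
      have : (2 * y - z - y : ZMod 3) = y - z := by ring
      rw [this] at h2
      simp only [Prod.mk.injEq, true_and]
      rw [← h2]; abel
  · rintro ⟨x, a⟩ ⟨y, b⟩ ⟨z, c⟩
    simp only [genOp, Prod.mk.injEq]
    have n0 : -(0 : ZMod 3) = 0 := by decide
    have n1 : -(1 : ZMod 3) = 2 := by decide
    have n2 : -(2 : ZMod 3) = 1 := by decide
    have s00 : (0 : ZMod 3) + 0 = 0 := by decide
    have s01 : (0 : ZMod 3) + 1 = 1 := by decide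
    have s02 : (0 : ZMod 3) + 2 = 2 := by decide
    have s10 : (1 : ZMod 3) + 0 = 1 := by decide
    have s11 : (1 : ZMod 3) + 1 = 2 := by decide
    have s12 : (1 : ZMod 3) + 2 = 0 := by decide
    have s20 : (2 : ZMod 3) + 0 = 2 := by decide
    have s21 : (2 : ZMod 3) + 1 = 0 := by decide
    have s22 : (2 : ZMod 3) + 2 = 1 := by decide
    have d00 : (0 : ZMod 3) - 0 = 0 := by decide
    have d01 : (0 : ZMod 3) - 1 = 2 := by decide
    have d02 : (0 : ZMod 3) - 2 = 1 := by decide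
    have d10 : (1 : ZMod 3) - 0 = 1 := by decide
    have d11 : (1 : ZMod 3) - 1 = 0 := by decide
    have d12 : (1 : ZMod 3) - 2 = 2 := by decide
    have d20 : (2 : ZMod 3) - 0 = 2 := by decide
    have d21 : (2 : ZMod 3) - 1 = 1 := by decide
    have d22 : (2 : ZMod 3) - 2 = 0 := by decide
    constructor
    · ring
    · have hx : ∀ u : ZMod 3, u = 0 ∨ u = 1 ∨ u = 2 := by decide
      have e3 : (2 * y - x - z : ZMod 3) = (y - z) - (x - y) := by ring
      have e4 : (x - z : ZMod 3) = (x - y) + (y - z) := by ring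
      have e5 : (2 * z - x - (2 * z - y) : ZMod 3) = -(x - y) := by ring
      rw [e3, e4, e5]
      rcases hx (x - y) with h1 | h1 | h1 <;>
        rcases hx (y - z) with h2 | h2 | h2 <;>
        rw [h1, h2] <;>
        simp only [n0, n1, n2, s00, s01, s02, s10, s11, s12, s20, s21, s22,
          d00, d01, d02, d10, d11, d12, d20, d21, d22,
          hμ0, hμ1, hμ2, hτ0] <;>
        module
end

section
/- For any abelian group A and any function τ: Z₃ → A with τ(0)=0, the Galkin quandle G(A, τ) is connected, i.e., the group of inner automorphisms generated by right translations acts transitively on Z₃ × A. -/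
/-- Right translation by `w` as a permutation. -/
def galPerm {A : Type*} [AddCommGroup A] (μ : ZMod 3 → ℤ) (τ : ZMod 3 → A)
    (w : ZMod 3 × A) : Equiv.Perm (ZMod 3 × A) where
  toFun z := genOp μ τ z w
  invFun q := (2 * w.1 - q.1, -q.2 + μ (w.1 - q.1) • w.2 + τ (w.1 - q.1))
  left_inv z := by
    simp only [genOp]
    have h1 : 2 * w.1 - (2 * w.1 - z.1) = z.1 := by ring
    have h2 : w.1 - (2 * w.1 - z.1) = z.1 - w.1 := by ring
    rw [h1, h2]
    refine Prod.ext rfl ?_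
    simp only
    abel
  right_inv q := by
    simp only [genOp]
    have h1 : 2 * w.1 - (2 * w.1 - q.1) = q.1 := by ring
    have h2 : (2 * w.1 - q.1) - w.1 = w.1 - q.1 := by ring
    rw [h1, h2]
    refine Prod.ext rfl ?_
    simp only
    abel

theorem stmt_5 {A : Type*} [AddCommGroup A] (μ : ZMod 3 → ℤ) (τ : ZMod 3 → A)
    (hμ0 : μ 0 = 2) (hμ1 : μ 1 = -1) (hμ2 : μ 2 = -1) (hτ0 : τ 0 = 0) :
    ∀ p q : ZMod 3 × A,
      ∃ σ ∈ Subgroup.closure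
          {σ : Equiv.Perm (ZMod 3 × A) | ∃ w : ZMod 3 × A, ∀ z, σ z = genOp μ τ z w},
        σ p = q := by
  intro p q
  have hmu : ∀ d : ZMod 3, d ≠ 0 → μ d = -1 := by
    intro d hd
    have key : ∀ e : ZMod 3, e ≠ 0 → e = 1 ∨ e = 2 := by decide
    have : d = 1 ∨ d = 2 := key d hd
    rcases this with h | h <;> rw [h] <;> assumption
  set y1 : ZMod 3 := if p.1 = q.1 then p.1 + 1 else q.1 with hy1
  set y2 : ZMod 3 := y1 + 2 * (q.1 - p.1) with hy2
  set d1 : ZMod 3 := p.1 - y1 with hd1def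
  set d2 : ZMod 3 := 2 * y1 - p.1 - y2 with hd2def
  have hd1 : d1 ≠ 0 := by
    rw [hd1def, hy1]
    split_ifs with h
    · have : ∀ x : ZMod 3, x - (x + 1) ≠ 0 := by decide
      exact this p.1
    · exact sub_ne_zero.mpr h
  have hd2 : d2 ≠ 0 := by
    rw [hd2def, hy2, hy1]
    split_ifs with h
    · rw [h]
      have : ∀ x : ZMod 3, 2 * (x + 1) - x - ((x + 1) + 2 * (x - x)) ≠ 0 := by
        decide
      exact this q.1
    · have : ∀ x y : ZMod 3, x ≠ y →
          2 * y - x - (y + 2 * (y - x)) ≠ 0 := by decide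
      exact this p.1 q.1 h
  set b2 : A := p.2 - τ d1 + τ d2 - q.2 with hb2
  refine ⟨galPerm μ τ (y2, b2) * galPerm μ τ (y1, 0), ?_, ?_⟩
  · exact Subgroup.mul_mem _
      (Subgroup.subset_closure ⟨(y2, b2), fun z => rfl⟩)
      (Subgroup.subset_closure ⟨(y1, 0), fun z => rfl⟩)
  · show galPerm μ τ (y2, b2) (galPerm μ τ (y1, 0) p) = q
    have step1 : galPerm μ τ (y1, 0) p = (2 * y1 - p.1, -p.2 + τ d1) := by
      simp only [galPerm, genOp, Equiv.coe_fn_mk, smul_zero]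
      rw [← hd1def]
      refine Prod.ext rfl ?_
      simp only
      abel
    rw [step1]
    simp only [galPerm, genOp, Equiv.coe_fn_mk]
    have hfst : (2 * y1 - p.1) - y2 = d2 := by rw [hd2def]
    rw [hfst, hmu d2 hd2]
    refine Prod.ext ?_ ?_
    · show 2 * y2 - (2 * y1 - p.1) = q.1
      rw [hy2]
      have h3 : (3 : ZMod 3) = 0 := by decide
      linear_combination (q.1 - p.1) * h3
    · show -(-p.2 + τ d1) + (-1 : ℤ) • b2 + τ d2 = q.2
      rw [hb2, neg_smul, one_smul]
      abel
end

section
/- The Galkin quandle G(A, τ) is Latin (i.e., every left translation x ↦ a*x is a bijection) if and only if the finite abelian group A has odd order. -/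
lemma two_smul_inj {A : Type*} [AddCommGroup A] [Fintype A]
    (h : Odd (Fintype.card A)) {a b : A} (hab : (2:ℤ) • a = (2:ℤ) • b) : a = b := by
  have h0 : (2:ℤ) • (a - b) = 0 := by rw [smul_sub, hab, sub_self]
  have h2 : addOrderOf (a - b) ∣ 2 := by
    have : (2:ℕ) • (a - b) = 0 := by exact_mod_cast h0
    exact addOrderOf_dvd_of_nsmul_eq_zero this
  have hc : addOrderOf (a - b) ∣ Fintype.card A := addOrderOf_dvd_card
  rcases (Nat.dvd_prime Nat.prime_two).mp h2 with hd | hd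
  · exact sub_eq_zero.mp (AddMonoid.addOrderOf_eq_one_iff.mp hd)
  · exfalso
    rw [hd] at hc
    obtain ⟨k, hk⟩ := hc
    have := Nat.odd_iff.mp h
    omega

theorem stmt_8 {A : Type*} [AddCommGroup A] [Fintype A] (μ : ZMod 3 → ℤ) (τ : ZMod 3 → A)
    (hμ0 : μ 0 = 2) (hμ1 : μ 1 = -1) (hμ2 : μ 2 = -1) (hτ0 : τ 0 = 0) :
    (∀ p : ZMod 3 × A, Function.Bijective (fun q => genOp μ τ p q)) ↔
      Odd (Fintype.card A) := by
  constructor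
  · intro h
    by_contra hodd
    have heven : 2 ∣ Fintype.card A := (Nat.not_odd_iff_even.mp hodd).two_dvd
    obtain ⟨a, ha⟩ := exists_prime_addOrderOf_dvd_card 2 heven
    have ha0 : a ≠ 0 := by
      intro h0; rw [h0, addOrderOf_zero] at ha; omega
    have h2a : genOp μ τ (0, 0) (0, a) = genOp μ τ (0, 0) (0, 0) := by
      simp only [genOp, hτ0]
      have : (2:ℕ) • a = 0 := by rw [← ha]; exact addOrderOf_nsmul_eq_zero a
      simp [hμ0, show (2:ℤ) • a = 0 by exact_mod_cast this]
    have := (h (0, 0)).1 h2a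
    exact ha0 (by simpa using congrArg Prod.snd this)
  · intro hodd p
    rw [← Finite.injective_iff_bijective]
    intro q q' heq
    have h1 : q.1 = q'.1 := by
      have := congrArg Prod.fst heq
      simp only [genOp, sub_left_inj] at this
      exact mul_left_cancel₀ (by decide : (2 : ZMod 3) ≠ 0) this
    have h2 : μ (p.1 - q.1) • q.2 = μ (p.1 - q.1) • q'.2 := by
      have := congrArg Prod.snd heq
      simp only [genOp, h1] at this
      rw [h1]
      exact add_left_cancel (add_right_cancel this)
    have h2' : q.2 = q'.2 := by
      have : p.1 - q.1 = 0 ∨ p.1 - q.1 = 1 ∨ p.1 - q.1 = 2 :=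
        (by decide : ∀ d : ZMod 3, d = 0 ∨ d = 1 ∨ d = 2) _
      rcases this with hd | hd | hd
      · rw [hd, hμ0] at h2; exact two_smul_inj hodd h2
      · rw [hd, hμ1] at h2; simpa using h2
      · rw [hd, hμ2] at h2; simpa using h2
    exact Prod.ext h1 h2'
end

section
/- Every Galkin quandle G(A, τ) is faithful: if (x,a)*(y,b) = (x,a)*(y',b') for all (x,a) ∈ Z₃ × A, then (y,b) = (y',b'). Equivalently, the map sending an element to its right translation is injective. -/
theorem stmt_9 {A : Type*} [AddCommGroup A] (μ : ZMod 3 → ℤ) (τ : ZMod 3 → A)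
    (hμ0 : μ 0 = 2) (hμ1 : μ 1 = -1) (hμ2 : μ 2 = -1) (hτ0 : τ 0 = 0) :
    ∀ q q' : ZMod 3 × A, (∀ p : ZMod 3 × A, genOp μ τ p q = genOp μ τ p q') → q = q' := by
  intro q q' h
  have h1 : q.1 = q'.1 := by
    have := congrArg Prod.fst (h (0, 0))
    simp only [genOp] at this
    have h2 : (2 : ZMod 3) * q.1 = 2 * q'.1 := by linear_combination this
    have : (2 : ZMod 3) * (2 * q.1) = 2 * (2 * q'.1) := by rw [h2]
    rw [← mul_assoc, ← mul_assoc] at this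
    norm_num at this
    exact this.resolve_right (by decide)
  have h2 : q.2 = q'.2 := by
    have := congrArg Prod.snd (h (q.1 + 1, 0))
    simp only [genOp, ← h1] at this
    simp only [add_sub_cancel_left, hμ1] at this
    have : (-1 : ℤ) • q.2 = (-1 : ℤ) • q'.2 := by
      have := add_right_cancel this
      simpa using this
    simpa using this
  exact Prod.ext h1 h2
end

section
/- Every finite connected left-distributive quandle is Latin. -/
/-!
Induct on `|X|`. The left translation `L_a` is a surjective quandle homomorphism onto `S = a * X`
(this is left distributivity), so `S` is a connected subquandle, Latin by induction if `S ≠ X`.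
Right translations generate automorphisms, so all the sets `x * X` have the size of `S`; for
`x ∈ S` the set `x * X` contains `x * S = S`, hence equals it. Thus `S` is closed under every
right translation, so by connectedness `S = X`, i.e. `L_a` is onto.
-/

open Function Set Pointwise

section

variable {X Y : Type*}

theorem Equiv.Perm.image_eq_of_mem_closure [Finite X] {G : Set (Equiv.Perm X)} {S : Set X}
    (hG : ∀ τ ∈ G, MapsTo τ S S) {σ : Equiv.Perm X} (hσ : σ ∈ Subgroup.closure G) :
    σ '' S = S := by
  have hle : Subgroup.closure G ≤ MulAction.stabilizer (Equiv.Perm X) S := by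
    refine (Subgroup.closure_le _).2 fun τ hτ => ?_
    rw [SetLike.mem_coe, MulAction.mem_stabilizer_iff, ← Set.image_smul]
    exact eq_of_subset_of_ncard_le (hG τ hτ).image_subset
      (ncard_image_of_injective S τ.injective).ge
  simpa [← Set.image_smul] using hle hσ

structure IsQuandle (op : X → X → X) : Prop where
  idem : ∀ a, op a a = a
  rinv : ∀ b, Bijective (fun a => op a b)
  rsd : ∀ a b c, op (op a b) c = op (op a c) (op b c)

def rightMulGroup (op : X → X → X) : Subgroup (Equiv.Perm X) :=
  Subgroup.closure {σ : Equiv.Perm X | ∃ w : X, ∀ z, σ z = op z w}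

def IsConnectedOp (op : X → X → X) : Prop :=
  ∀ p q : X, ∃ σ ∈ rightMulGroup op, σ p = q

theorem map_op_of_mem_rightMulGroup {op : X → X → X}
    (rsd : ∀ a b c, op (op a b) c = op (op a c) (op b c))
    {σ : Equiv.Perm X} (hσ : σ ∈ rightMulGroup op) (x y : X) :
    σ (op x y) = op (σ x) (σ y) := by
  induction hσ using Subgroup.closure_induction generalizing x y with
  | mem τ hτ =>
    obtain ⟨w, hw⟩ := hτ
    simp only [hw]
    exact rsd x y w
  | one => rfl
  | mul σ₁ σ₂ _ _ ih₁ ih₂ => simp only [Equiv.Perm.mul_apply, ih₁, ih₂]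
  | inv τ _ ih =>
    apply τ.injective
    simp [ih]

theorem IsConnectedOp.of_surjective [Finite X] {op : X → X → X} {op' : Y → Y → Y}
    (rinv' : ∀ b, Bijective (fun a => op' a b)) {f : X → Y} (hf : Surjective f)
    (hom : ∀ x y, f (op x y) = op' (f x) (f y)) (conn : IsConnectedOp op) :
    IsConnectedOp op' := by
  intro p' q'
  obtain ⟨p, rfl⟩ := hf p'
  obtain ⟨q, rfl⟩ := hf q'
  let T : Set X := {u | ∃ τ ∈ rightMulGroup op', τ (f p) = f u}
  have hT : ∀ σ ∈ {σ : Equiv.Perm X | ∃ w : X, ∀ z, σ z = op z w}, MapsTo σ T T := by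
    rintro σ ⟨w, hσ⟩ u ⟨τ, hτ, hτu⟩
    refine ⟨Equiv.ofBijective _ (rinv' (f w)) * τ,
      mul_mem (Subgroup.subset_closure ⟨f w, fun _ => rfl⟩) hτ, ?_⟩
    simp [hτu, hσ, hom]
  obtain ⟨σ, hσ, rfl⟩ := conn p q
  have : σ p ∈ σ '' T := ⟨p, ⟨1, one_mem _, rfl⟩, rfl⟩
  rwa [Equiv.Perm.image_eq_of_mem_closure hT hσ] at this

def Set.restrictOp (op : X → X → X) (S : Set X) (hS : ∀ x ∈ S, ∀ y ∈ S, op x y ∈ S) :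
    S → S → S :=
  fun x y => ⟨op x y, hS _ x.2 _ y.2⟩

theorem IsQuandle.restrictOp [Finite X] {op : X → X → X} (hq : IsQuandle op) {S : Set X}
    (hS : ∀ x ∈ S, ∀ y ∈ S, op x y ∈ S) : IsQuandle (S.restrictOp op hS) where
  idem x := Subtype.ext (hq.idem x)
  rinv y := Finite.injective_iff_bijective.1 fun _ _ h =>
    Subtype.ext ((hq.rinv y).injective (congrArg Subtype.val h))
  rsd x y z := Subtype.ext (hq.rsd x y z)

theorem IsQuandle.ncard_range_op_eq {op : X → X → X} (hq : IsQuandle op)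
    (conn : IsConnectedOp op) (a x : X) : (range (op x)).ncard = (range (op a)).ncard := by
  obtain ⟨σ, hσ, rfl⟩ := conn a x
  have : range (op (σ a)) = σ '' range (op a) := calc
    range (op (σ a)) = range (op (σ a) ∘ σ) := (σ.surjective.range_comp _).symm
    _ = range (σ ∘ op a) := by
      congr 1
      funext u
      simp [map_op_of_mem_rightMulGroup hq.rsd hσ]
    _ = σ '' range (op a) := range_comp _ _
  rw [this, ncard_image_of_injective _ σ.injective]

theorem IsQuandle.range_op_eq_univ [Finite X] {op : X → X → X} (hq : IsQuandle op)
    (conn : IsConnectedOp op) (a : X)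
    (hS : ∀ x ∈ range (op a), SurjOn (op x) (range (op a)) (range (op a))) :
    range (op a) = univ := by
  have hrange : ∀ x ∈ range (op a), range (op x) = range (op a) := fun x hx =>
    (eq_of_subset_of_ncard_le (fun s hs => (hS x hx hs).imp fun _ => And.right)
      (hq.ncard_range_op_eq conn a x).le).symm
  have hmaps : ∀ σ ∈ {σ : Equiv.Perm X | ∃ w : X, ∀ z, σ z = op z w},
      MapsTo σ (range (op a)) (range (op a)) := by
    rintro σ ⟨w, hσ⟩ z hz
    rw [hσ, ← hrange z hz]
    exact mem_range_self w
  refine eq_univ_of_forall fun b => ?_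
  obtain ⟨σ, hσ, rfl⟩ := conn a b
  rw [← Equiv.Perm.image_eq_of_mem_closure hmaps hσ]
  exact mem_image_of_mem σ ⟨a, hq.idem a⟩

theorem IsQuandle.bijective_op_left [Finite X] {op : X → X → X} (hq : IsQuandle op)
    (ld : ∀ a b c, op a (op b c) = op (op a b) (op a c)) (conn : IsConnectedOp op) (a : X) :
    Bijective (op a) := by
  induction hn : Nat.card X using Nat.strong_induction_on generalizing X with
  | _ n IH =>
    set S := range (op a)
    have hS : ∀ x ∈ S, ∀ y ∈ S, op x y ∈ S := by
      rintro _ ⟨u, rfl⟩ _ ⟨v, rfl⟩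
      exact ⟨op u v, ld a u v⟩
    suffices hSu : S = univ from
      ⟨Finite.injective_iff_surjective.2 (range_eq_univ.1 hSu), range_eq_univ.1 hSu⟩
    by_contra hne
    have hlt : Nat.card S < n := hn ▸ Nat.card_coe_set_eq S ▸ ncard_lt_card hne
    have hSconn : IsConnectedOp (S.restrictOp op hS) :=
      conn.of_surjective (hq.restrictOp hS).rinv (f := codRestrict (op a) S mem_range_self)
        (fun ⟨_, u, hu⟩ => ⟨u, Subtype.ext hu⟩) fun x y => Subtype.ext (ld a x y)
    have hSlatin (x : S) : Bijective (S.restrictOp op hS x) :=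
      IH _ hlt (hq.restrictOp hS) (fun x y z => Subtype.ext (ld x y z)) hSconn x rfl
    exact hne <| hq.range_op_eq_univ conn a fun x hx s hs => by
      obtain ⟨y, hy⟩ := (hSlatin ⟨x, hx⟩).surjective ⟨s, hs⟩
      exact ⟨y, y.2, congrArg Subtype.val hy⟩

end

theorem stmt_14 {X : Type*} [Fintype X] (op : X → X → X)
    (idem : ∀ a, op a a = a)
    (rinv : ∀ b, Function.Bijective (fun a => op a b))
    (rsd : ∀ a b c, op (op a b) c = op (op a c) (op b c))
    (ld : ∀ a b c, op a (op b c) = op (op a b) (op a c))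
    (conn : ∀ p q : X,
      ∃ σ ∈ Subgroup.closure {σ : Equiv.Perm X | ∃ w : X, ∀ z, σ z = op z w}, σ p = q) :
    ∀ a : X, Function.Bijective (fun b => op a b) :=
  IsQuandle.bijective_op_left ⟨idem, rinv, rsd⟩ ld conn
end

section
/- Let p > 3 be prime and let μ: Z_p → Z be a function with μ(0) = 2 and μ(x+y) + μ(x-y) = μ(x)μ(y) for all x, y ∈ Z_p. Then μ(x) = 2 for all x ∈ Z_p. -/
private lemma aux_growth (p : ℕ) (hp : Nat.Prime p) (μ : ZMod p → ℤ)
    (hμ0 : μ 0 = 2)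
    (hμ : ∀ x y : ZMod p, μ (x + y) + μ (x - y) = μ x * μ y)
    (x : ZMod p) : μ x ≤ 2 := by
  by_contra h
  push_neg at h
  have ha : 3 ≤ μ x := by omega
  set b : ℕ → ℤ := fun n => μ ((n : ZMod p) * x) with hb
  have hb0 : b 0 = 2 := by simp [hb, hμ0]
  have hb1 : b 1 = μ x := by simp [hb]
  have key : ∀ n : ℕ, b (n + 2) + b n = μ x * b (n + 1) := by
    intro n
    have h := hμ (((n : ZMod p) + 1) * x) x
    have e1 : ((n : ZMod p) + 1) * x + x = ((n + 2 : ℕ) : ZMod p) * x := by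
      push_cast; ring
    have e2 : ((n : ZMod p) + 1) * x - x = ((n : ℕ) : ZMod p) * x := by
      ring
    have e3 : ((n : ZMod p) + 1) * x = ((n + 1 : ℕ) : ZMod p) * x := by
      push_cast; ring
    rw [e1, e2, e3] at h
    simpa [hb, mul_comm] using h
  have hbp : b p = 2 := by
    simp [hb, ZMod.natCast_self, hμ0]
  have mono : ∀ n, 2 ≤ b n ∧ b n ≤ b (n + 1) := by
    intro n
    induction n with
    | zero =>
      show 2 ≤ b 0 ∧ b 0 ≤ b 1
      omega
    | succ k ih =>
      obtain ⟨h1, h2⟩ := ih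
      have hk := key k
      constructor
      · omega
      · nlinarith
  have hge : ∀ n, 3 ≤ b (n + 1) := by
    intro n
    induction n with
    | zero =>
      show 3 ≤ b 1
      omega
    | succ k ih =>
      have := (mono (k + 1)).2
      omega
  obtain ⟨k, rfl⟩ : ∃ k, p = k + 1 := ⟨p - 1, by have := hp.two_le; omega⟩
  have := hge k
  omega

private lemma aux_small (p : ℕ) (hp : Nat.Prime p) (hp3 : 3 < p) (μ : ZMod p → ℤ)
    (hμ0 : μ 0 = 2)
    (hμ : ∀ x y : ZMod p, μ (x + y) + μ (x - y) = μ x * μ y)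
    (x : ZMod p)
    (h : μ x = -2 ∨ μ x = -1 ∨ μ x = 0 ∨ μ x = 1) : False := by
  set b : ℕ → ℤ := fun n => μ ((n : ZMod p) * x) with hb
  have hb0 : b 0 = 2 := by simp [hb, hμ0]
  have hb1 : b 1 = μ x := by simp [hb]
  have key : ∀ n : ℕ, b (n + 2) + b n = μ x * b (n + 1) := by
    intro n
    have h := hμ (((n : ZMod p) + 1) * x) x
    have e1 : ((n : ZMod p) + 1) * x + x = ((n + 2 : ℕ) : ZMod p) * x := by
      push_cast; ring
    have e2 : ((n : ZMod p) + 1) * x - x = ((n : ℕ) : ZMod p) * x := by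
      ring
    have e3 : ((n : ZMod p) + 1) * x = ((n + 1 : ℕ) : ZMod p) * x := by
      push_cast; ring
    rw [e1, e2, e3] at h
    simpa [hb, mul_comm] using h
  have hbp : b p = 2 := by
    simp [hb, ZMod.natCast_self, hμ0]
  have e0 : b 2 + b 0 = μ x * b 1 := key 0
  have e1 : b 3 + b 1 = μ x * b 2 := key 1
  have e2 : b 4 + b 2 = μ x * b 3 := key 2
  have e3 : b 5 + b 3 = μ x * b 4 := key 3
  have e4 : b 6 + b 4 = μ x * b 5 := key 4
  have e5 : b 7 + b 5 = μ x * b 6 := key 5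
  have e6 : b 8 + b 6 = μ x * b 7 := key 6
  have e7 : b 9 + b 7 = μ x * b 8 := key 7
  have e8 : b 10 + b 8 = μ x * b 9 := key 8
  have e9 : b 11 + b 9 = μ x * b 10 := key 9
  have e10 : b 12 + b 10 = μ x * b 11 := key 10
  have e11 : b 13 + b 11 = μ x * b 12 := key 11
  have base : b 12 = 2 ∧ b 13 = μ x := by
    rcases h with h | h | h | h <;>
      rw [h] at e0 e1 e2 e3 e4 e5 e6 e7 e8 e9 e10 e11 hb1 ⊢ <;>
      constructor <;> omega
  have period : ∀ n, b (n + 12) = b n ∧ b (n + 13) = b (n + 1) := by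
    intro n
    induction n with
    | zero =>
      simp only [Nat.zero_add, hb0, hb1]
      exact base
    | succ k ih =>
      obtain ⟨hA, hB⟩ := ih
      have h1 := key (k + 12)
      rw [show k + 12 + 2 = k + 14 by omega, show k + 12 + 1 = k + 13 by omega] at h1
      have h2 := key k
      rw [hA, hB] at h1
      refine ⟨?_, ?_⟩
      · rw [show k + 1 + 12 = k + 13 by omega]
        exact hB
      · rw [show k + 1 + 13 = k + 14 by omega, show k + 1 + 1 = k + 2 by omega]
        linarith
  have multq : ∀ q n, b (n + 12 * q) = b n := by
    intro q
    induction q with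
    | zero => intro n; simp
    | succ k ih =>
      intro n
      rw [show n + 12 * (k + 1) = (n + 12 * k) + 12 by ring]
      rw [(period (n + 12 * k)).1]
      exact ih n
  have hbr : b (p % 12) = 2 := by
    have hq : p = p % 12 + 12 * (p / 12) := by omega
    rw [hq, multq] at hbp
    exact hbp
  have h2p : ¬ (2 ∣ p) := by
    intro hd
    have := (Nat.prime_dvd_prime_iff_eq Nat.prime_two hp).mp hd
    omega
  have h3p : ¬ (3 ∣ p) := by
    intro hd
    have := (Nat.prime_dvd_prime_iff_eq Nat.prime_three hp).mp hd
    omega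
  have hr : p % 12 = 1 ∨ p % 12 = 5 ∨ p % 12 = 7 ∨ p % 12 = 11 := by omega
  rcases hr with hr | hr | hr | hr <;> rw [hr] at hbr <;>
    rcases h with h | h | h | h <;>
      rw [h] at e0 e1 e2 e3 e4 e5 e6 e7 e8 e9 hb1 <;> omega

theorem stmt_18 (p : ℕ) (hp : Nat.Prime p) (hp3 : 3 < p) (μ : ZMod p → ℤ)
    (hμ0 : μ 0 = 2)
    (hμ : ∀ x y : ZMod p, μ (x + y) + μ (x - y) = μ x * μ y) :
    ∀ x : ZMod p, μ x = 2 := by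
  intro x
  have h1 := aux_growth p hp μ hμ0 hμ x
  have h2x : μ (x + x) = μ x * μ x - 2 := by
    have h := hμ x x
    simp [hμ0] at h
    linarith
  have h2 := aux_growth p hp μ hμ0 hμ (x + x)
  rw [h2x] at h2
  have hlow : -2 ≤ μ x := by nlinarith
  by_contra hne
  exact aux_small p hp hp3 μ hμ0 hμ x (by omega)
end
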